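/- arXiv:2410.15889 — 2 statements merged into one kernel-verified Lean document; each statement's English description precedes it below -/
import Mathlib

section
/- Let d, K ≥ 1, let x ∈ ℝ^d, and let δ > 0, ε > 0, β > 0. Let (f_i)_{i≥1} be a sequence of functions f_i : ℝ^d → ℝ^K, each differentiable at every point of the closed ball U_δ(x), with ‖Df_i(y)‖ ≤ β (operator norm of the derivative) for all y ∈ U_δ(x) and all i. Let (z_i)_{i≥1} be a sequence of points with z_i ∈ U_δ(x) for all i. Assume that ‖f_i(x)‖_∞ < ε/4 for all i ≥ 1, and that ‖f_i(z_j)‖_∞ < ε/4 whenever j < i. Then there exists N ≥ 1 such that ‖f_N(z_N)‖_∞ < ε. -/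
/-- If each `f i` (i ≥ 1) is differentiable on the closed Euclidean ball
`U_δ(x)` with operator norm of the derivative bounded by `β`, the points `z i` lie in
the ball, `‖f i x‖_∞ < ε/4` for all `i ≥ 1`, and `‖f i (z j)‖_∞ < ε/4` whenever
`1 ≤ j < i`, then there exists `N ≥ 1` with `‖f N (z N)‖_∞ < ε`.
Here `ℝ^d` is `EuclideanSpace ℝ (Fin d)` (Euclidean norm) and `ℝ^K` is `Fin K → ℝ`
(sup norm). -/
theorem model_mimic_quantitative_core
    (d K : ℕ) (hd : 1 ≤ d) (hK : 1 ≤ K)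
    (x : EuclideanSpace ℝ (Fin d)) (δ ε β : ℝ)
    (hδ : 0 < δ) (hε : 0 < ε) (hβ : 0 < β)
    (f : ℕ → EuclideanSpace ℝ (Fin d) → (Fin K → ℝ))
    (hdiff : ∀ i, 1 ≤ i → ∀ y ∈ Metric.closedBall x δ, DifferentiableAt ℝ (f i) y)
    (hgrad : ∀ i, 1 ≤ i → ∀ y ∈ Metric.closedBall x δ, ‖fderiv ℝ (f i) y‖ ≤ β)
    (z : ℕ → EuclideanSpace ℝ (Fin d))
    (hz : ∀ i, 1 ≤ i → z i ∈ Metric.closedBall x δ)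
    (hfx : ∀ i, 1 ≤ i → ‖f i x‖ < ε / 4)
    (hfz : ∀ i j, 1 ≤ j → j < i → ‖f i (z j)‖ < ε / 4) :
    ∃ N, 1 ≤ N ∧ ‖f N (z N)‖ < ε := by
  -- The ball is compact; extract a convergent subsequence of (z (n+1)).
  obtain ⟨a, -, φ, hφ, hconv⟩ :=
    (isCompact_closedBall x δ).tendsto_subseq (x := fun n => z (n + 1))
      (fun n => hz (n + 1) (Nat.le_add_left 1 n))
  have hr : 0 < ε / (4 * β) := by positivity
  obtain ⟨M, hM⟩ := (Metric.tendsto_atTop.mp hconv) (ε / (4 * β)) hr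
  set j := φ M + 1 with hj
  set i := φ (M + 1) + 1 with hi
  have hji : j < i := by
    have h0 : φ M < φ (M + 1) := hφ (by omega)
    omega
  have h1 : (1 : ℕ) ≤ j := Nat.le_add_left 1 _
  have hi1 : (1 : ℕ) ≤ i := Nat.le_add_left 1 _
  have hdist : dist (z i) (z j) < ε / (2 * β) := by
    have h1 := hM M le_rfl
    have h2 := hM (M + 1) (Nat.le_succ M)
    calc dist (z i) (z j) ≤ dist (z i) a + dist a (z j) := dist_triangle _ _ _
      _ < ε / (4 * β) + ε / (4 * β) := by
          simpa [dist_comm] using add_lt_add h2 h1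
      _ = ε / (2 * β) := by ring
  -- Mean value inequality on the convex ball.
  have hlip : ‖f i (z i) - f i (z j)‖ ≤ β * ‖z i - z j‖ :=
    (convex_closedBall x δ).norm_image_sub_le_of_norm_fderiv_le
      (fun y hy => hdiff i hi1 y hy) (fun y hy => hgrad i hi1 y hy)
      (hz j h1) (hz i hi1)
  have hnorm : ‖z i - z j‖ < ε / (2 * β) := by
    rwa [← dist_eq_norm]
  have hβne : (β : ℝ) ≠ 0 := ne_of_gt hβ
  have hmain : ‖f i (z i)‖ < ε := by
    have h2 : ‖f i (z j)‖ < ε / 4 := hfz i j h1 hji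
    have h3 : β * ‖z i - z j‖ < β * (ε / (2 * β)) :=
      mul_lt_mul_of_pos_left hnorm hβ
    have h4 : β * (ε / (2 * β)) = ε / 2 := by field_simp
    calc ‖f i (z i)‖ = ‖(f i (z i) - f i (z j)) + f i (z j)‖ := by rw [sub_add_cancel]
      _ ≤ ‖f i (z i) - f i (z j)‖ + ‖f i (z j)‖ := norm_add_le _ _
      _ < β * (ε / (2 * β)) + ε / 4 := add_lt_add (hlip.trans_lt h3) h2
      _ = ε / 2 + ε / 4 := by rw [h4]
      _ < ε := by linarith
  exact ⟨i, hi1, hmain⟩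
end

section
/- Let d, K ≥ 1, let x ∈ ℝ^d, and let δ > 0, ε > 0, β > 0. Let T : ℝ^d → ℝ^K (teacher) and S_i : ℝ^d → ℝ^K for i ≥ 1 (students) be functions such that each difference f_i = S_i − T is differentiable at every point of the closed ball U_δ(x) with ‖Df_i(y)‖ ≤ β for all y ∈ U_δ(x). Let (z_i)_{i≥1} be a sequence of points with z_i ∈ U_δ(x) for all i. Assume: (1) ‖S_i(x) − T(x)‖_∞ < ε/4 for all i, and ‖S_i(z_j) − T(z_j)‖_∞ < ε/4 whenever j < i; (2) there is a class index y such that for every i, y is the unique argmax of both S_i(x) and T(x) (i.e., h(S_i, x) = h(T, x) = y); (3) each z_i is an untargeted adversarial example for S_i: S_i(z_i) has a unique largest component at some index k_i ≠ y; (4) uniform confidence gap: for every i and every index j ≠ k_i, the k_i-th component of S_i(z_i) exceeds the j-th component by more than 2ε. Then there exists N ≥ 1 such that z_N is a transferable untargeted adversarial example from S_N to T: T(z_N) attains its unique maximum at k_N (so h(T, z_N) = h(S_N, z_N)), and in particular h(T, z_N) ≠ h(T, x) = y. -/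
/-- Model Mimic Attack transferability (paper's Theorem 1).
Teacher `T : ℝ^d → ℝ^K` and students `S i`, with each difference `S i - T`
differentiable on the closed Euclidean ball `U_δ(x)` with derivative operator norm
bounded by `β`. The points `z i` lie in the ball. Assume:
(1) `‖S i x - T x‖_∞ < ε/4` for all `i ≥ 1`, and `‖S i (z j) - T (z j)‖_∞ < ε/4`
    whenever `1 ≤ j < i`;
(2) some class `y` is the unique argmax of both `S i x` (for every `i ≥ 1`) and `T x`;
(3) each `z i` is an untargeted adversarial example for `S i`: `S i (z i)` attains its
    unique maximum at `k i ≠ y`;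
(4) uniform confidence gap: `S i (z i) (k i) - S i (z i) j > 2ε` for all `j ≠ k i`.
Then there exists `N ≥ 1` such that `T (z N)` attains its unique maximum at `k N`
(so `h(T, z N) = h(S N, z N)`), and `k N ≠ y` (so `h(T, z N) ≠ h(T, x)`).
Here `ℝ^d` is `EuclideanSpace ℝ (Fin d)` (Euclidean norm) and `ℝ^K` is `Fin K → ℝ`
(sup norm). -/
theorem model_mimic_attack_transferability
    (d K : ℕ) (hd : 1 ≤ d) (hK : 1 ≤ K)
    (x : EuclideanSpace ℝ (Fin d)) (δ ε β : ℝ)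
    (hδ : 0 < δ) (hε : 0 < ε) (hβ : 0 < β)
    (T : EuclideanSpace ℝ (Fin d) → (Fin K → ℝ))
    (S : ℕ → EuclideanSpace ℝ (Fin d) → (Fin K → ℝ))
    (hdiff : ∀ i, 1 ≤ i → ∀ u ∈ Metric.closedBall x δ,
      DifferentiableAt ℝ (fun v => S i v - T v) u)
    (hgrad : ∀ i, 1 ≤ i → ∀ u ∈ Metric.closedBall x δ,
      ‖fderiv ℝ (fun v => S i v - T v) u‖ ≤ β)
    (z : ℕ → EuclideanSpace ℝ (Fin d))
    (hz : ∀ i, 1 ≤ i → z i ∈ Metric.closedBall x δ)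
    -- (1) the students match the teacher within ε/4 at x and at previous points
    (hmatchx : ∀ i, 1 ≤ i → ‖S i x - T x‖ < ε / 4)
    (hmatchz : ∀ i j, 1 ≤ j → j < i → ‖S i (z j) - T (z j)‖ < ε / 4)
    -- (2) y is the unique argmax of S i x and of T x
    (y : Fin K)
    (hSx : ∀ i, 1 ≤ i → ∀ j, j ≠ y → S i x j < S i x y)
    (hTx : ∀ j, j ≠ y → T x j < T x y)
    -- (3) z i is an untargeted adversarial example for S i, with argmax k i ≠ y
    (k : ℕ → Fin K)
    (hky : ∀ i, 1 ≤ i → k i ≠ y)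
    (hadv : ∀ i, 1 ≤ i → ∀ j, j ≠ k i → S i (z i) j < S i (z i) (k i))
    -- (4) uniform confidence gap of more than 2ε
    (hgap : ∀ i, 1 ≤ i → ∀ j, j ≠ k i → S i (z i) (k i) - S i (z i) j > 2 * ε) :
    ∃ N, 1 ≤ N ∧ (∀ j, j ≠ k N → T (z N) j < T (z N) (k N)) ∧ k N ≠ y := by
  have hr : (0:ℝ) < ε / (4 * β) / 2 := by positivity
  obtain ⟨a, ha, φ, hφ, hconv⟩ :=
    (isCompact_closedBall x δ).tendsto_subseq
      (x := fun n => z (n + 1)) (fun n => hz (n + 1) (Nat.le_add_left 1 n))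
  rw [Metric.tendsto_atTop] at hconv
  obtain ⟨M, hM⟩ := hconv (ε / (4 * β) / 2) hr
  set j : ℕ := φ M + 1 with hjdef
  set i : ℕ := φ (M + 1) + 1 with hidef
  have hji : j < i := by
    have h : φ M < φ (M + 1) := hφ (Nat.lt_succ_self M); omega
  have hj1 : 1 ≤ j := by omega
  have hi1 : 1 ≤ i := by omega
  have hdist : dist (z i) (z j) < ε / (4 * β) := by
    have h1 := hM M le_rfl
    have h2 := hM (M + 1) (Nat.le_succ M)
    simp only [Function.comp_apply] at h1 h2
    calc dist (z i) (z j) ≤ dist (z i) a + dist (z j) a := dist_triangle_right _ _ _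
      _ < ε / (4 * β) := by rw [hidef, hjdef]; linarith
  have hlip : ‖(S i (z i) - T (z i)) - (S i (z j) - T (z j))‖ ≤ β * ‖z i - z j‖ :=
    (convex_closedBall x δ).norm_image_sub_le_of_norm_fderiv_le
      (hdiff i hi1) (hgrad i hi1) (hz j hj1) (hz i hi1)
  have hnormd : β * ‖z i - z j‖ < ε / 4 := by
    rw [← dist_eq_norm]
    calc β * dist (z i) (z j) < β * (ε / (4 * β)) := by
          exact mul_lt_mul_of_pos_left hdist hβ
      _ = ε / 4 := by field_simp
  have hsmall : ‖S i (z i) - T (z i)‖ < ε / 2 := by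
    have h3 := hmatchz i j hj1 hji
    calc ‖S i (z i) - T (z i)‖
        = ‖((S i (z i) - T (z i)) - (S i (z j) - T (z j))) + (S i (z j) - T (z j))‖ := by
          congr 1; abel
      _ ≤ ‖(S i (z i) - T (z i)) - (S i (z j) - T (z j))‖ + ‖S i (z j) - T (z j)‖ :=
          norm_add_le _ _
      _ < ε / 2 := by linarith [hlip]
  refine ⟨i, hi1, ?_, hky i hi1⟩
  intro l hl
  have hbk : |S i (z i) (k i) - T (z i) (k i)| < ε / 2 := by
    have := norm_le_pi_norm (S i (z i) - T (z i)) (k i)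
    simpa [Real.norm_eq_abs] using this.trans_lt hsmall
  have hbl : |S i (z i) l - T (z i) l| < ε / 2 := by
    have := norm_le_pi_norm (S i (z i) - T (z i)) l
    simpa [Real.norm_eq_abs] using this.trans_lt hsmall
  have hg := hgap i hi1 l hl
  rw [abs_lt] at hbk hbl
  linarith [hbk.1, hbk.2, hbl.1, hbl.2]
end
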